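/- arXiv:2102.11448 — 2 statements merged into one kernel-verified Lean document; each statement's English description precedes it below -/
import Mathlib

section
/- Suppose the value function V^π_M of the model M is L-Lipschitz as a function of the initial state, for some L ≥ 0. Then for every initial state s₀, letting (s_t) denote the trajectory of the model M' under π started at s₀, the value functions of the two models satisfy |V^π_{M'}(s₀) − V^π_M(s₀)| ≤ κ · L · E_{(s,a)∼ρ^π_{M'}}[dist(M'(s,a), M(s,a))]; equivalently, |V^π_{M'}(s₀) − V^π_M(s₀)| ≤ L · Σ_{t=0}^∞ γ^{t+1} · dist(M'(s_t, π(s_t)), M(s_t, π(s_t))), where the right-hand side is a value in [0,∞]. -/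
/-!
Write `Δ = V_{M'} - V_M`. Subtracting the Bellman equations of the two models at `s` and
bounding `V_M(M'(s, π s)) - V_M(M(s, π s))` by the Lipschitz hypothesis gives
`|Δ s| ≤ γ L dist(M'(s, π s), M(s, π s)) + γ |Δ (M'(s, π s))|`. Unrolling this along the
trajectory of `M'` leaves a remainder `γ^N |Δ s_N| ≤ γ^N · 2R/(1-γ)`, which vanishes.
-/

open scoped ENNReal

/-- Trajectory of a deterministic model `M` under policy `π` from initial state `s₀`. -/
noncomputable def traj {S A : Type*} (M : S × A → S) (π : S → A) (s₀ : S) : ℕ → S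
  | 0 => s₀
  | n + 1 => M (traj M π s₀ n, π (traj M π s₀ n))

/-- Value function `V^π_M(s₀) = Σ_t γ^t r(s_t, π(s_t))` along the trajectory of `M`. -/
noncomputable def value {S A : Type*} (M : S × A → S) (π : S → A)
    (r : S × A → ℝ) (γ : ℝ) (s₀ : S) : ℝ :=
  ∑' t : ℕ, γ ^ t * r (traj M π s₀ t, π (traj M π s₀ t))

open Filter Topology

theorem le_sum_pow_mul_add_pow_mul {x c : ℕ → ℝ} {γ : ℝ} (hγ : 0 ≤ γ)
    (hx : ∀ n, x n ≤ c n + γ * x (n + 1)) (N : ℕ) :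
    x 0 ≤ ∑ n ∈ Finset.range N, γ ^ n * c n + γ ^ N * x N := by
  induction N with
  | zero => simp
  | succ N ih =>
    have h_step := mul_le_mul_of_nonneg_left (hx N) (pow_nonneg hγ N)
    rw [Finset.sum_range_succ, pow_succ]
    linarith [mul_add (γ ^ N) (c N) (γ * x (N + 1)), mul_assoc (γ ^ N) γ (x (N + 1))]

theorem ofReal_le_tsum_pow_mul_of_le_add_mul_succ {x c : ℕ → ℝ} {γ B : ℝ}
    (hγ0 : 0 ≤ γ) (hγ1 : γ < 1) (hc : ∀ n, 0 ≤ c n) (hB : ∀ n, x n ≤ B)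
    (hx : ∀ n, x n ≤ c n + γ * x (n + 1)) :
    ENNReal.ofReal (x 0) ≤ ∑' n, ENNReal.ofReal (γ ^ n * c n) := by
  have h_tail : Tendsto (fun N ↦ ENNReal.ofReal (γ ^ N * B)) atTop (𝓝 0) := by
    simpa using ENNReal.tendsto_ofReal
      ((tendsto_pow_atTop_nhds_zero_of_lt_one hγ0 hγ1).mul_const B)
  refine ge_of_tendsto (by simpa using tendsto_const_nhds.add h_tail)
    (Eventually.of_forall fun N ↦ ?_)
  calc ENNReal.ofReal (x 0)
      ≤ ENNReal.ofReal (∑ n ∈ Finset.range N, γ ^ n * c n + γ ^ N * B) :=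
        ENNReal.ofReal_le_ofReal ((le_sum_pow_mul_add_pow_mul hγ0 hx N).trans
          (by gcongr; exact hB N))
    _ ≤ ∑ n ∈ Finset.range N, ENNReal.ofReal (γ ^ n * c n) + ENNReal.ofReal (γ ^ N * B) := by
        rw [← ENNReal.ofReal_sum_of_nonneg fun n _ ↦ mul_nonneg (pow_nonneg hγ0 n) (hc n)]
        exact ENNReal.ofReal_add_le
    _ ≤ ∑' n, ENNReal.ofReal (γ ^ n * c n) + ENNReal.ofReal (γ ^ N * B) := by
        gcongr; exact ENNReal.sum_le_tsum _

theorem summable_pow_mul_of_abs_le {f : ℕ → ℝ} {γ R : ℝ} (hγ0 : 0 ≤ γ) (hγ1 : γ < 1)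
    (hf : ∀ t, |f t| ≤ R) : Summable fun t ↦ γ ^ t * f t :=
  Summable.of_norm_bounded (E := ℝ) ((summable_geometric_of_lt_one hγ0 hγ1).mul_right R)
    fun t ↦ by
      rw [Real.norm_eq_abs, abs_mul, abs_of_nonneg (pow_nonneg hγ0 t)]
      exact mul_le_mul_of_nonneg_left (hf t) (pow_nonneg hγ0 t)

theorem abs_tsum_pow_mul_le {f : ℕ → ℝ} {γ R : ℝ} (hγ0 : 0 ≤ γ) (hγ1 : γ < 1)
    (hf : ∀ t, |f t| ≤ R) : |∑' t, γ ^ t * f t| ≤ R / (1 - γ) := by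
  rw [div_eq_inv_mul, ← Real.norm_eq_abs]
  refine tsum_of_norm_bounded ((hasSum_geometric_of_lt_one hγ0 hγ1).mul_right R) fun t ↦ ?_
  rw [Real.norm_eq_abs, abs_mul, abs_of_nonneg (pow_nonneg hγ0 t)]
  exact mul_le_mul_of_nonneg_left (hf t) (pow_nonneg hγ0 t)

section

variable {S A : Type*} (M : S × A → S) (π : S → A)

theorem traj_succ (s : S) (n : ℕ) :
    traj M π s (n + 1) = traj M π (M (s, π s)) n := by
  induction n with
  | zero => rfl
  | succ n ih => exact congrArg (fun s' ↦ M (s', π s')) ih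

variable {r : S × A → ℝ} {R γ : ℝ}

theorem abs_value_le (hγ0 : 0 ≤ γ) (hγ1 : γ < 1) (hR : ∀ p, |r p| ≤ R) (s : S) :
    |value M π r γ s| ≤ R / (1 - γ) :=
  abs_tsum_pow_mul_le hγ0 hγ1 fun _ ↦ hR _

theorem value_eq_add_mul_value (hγ0 : 0 ≤ γ) (hγ1 : γ < 1) (hR : ∀ p, |r p| ≤ R) (s : S) :
    value M π r γ s = r (s, π s) + γ * value M π r γ (M (s, π s)) := by
  rw [value, (summable_pow_mul_of_abs_le hγ0 hγ1 fun _ ↦ hR _).tsum_eq_zero_add, value,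
    ← tsum_mul_left]
  simp only [traj_succ, pow_succ, pow_zero, one_mul, mul_comm _ γ, mul_assoc]
  rfl

theorem abs_value_sub_value_le [PseudoMetricSpace S] (M' : S × A → S) {L : ℝ}
    (hγ0 : 0 ≤ γ) (hγ1 : γ < 1) (hR : ∀ p, |r p| ≤ R)
    (hLip : ∀ s s', |value M π r γ s - value M π r γ s'| ≤ L * dist s s') (s : S) :
    |value M' π r γ s - value M π r γ s| ≤
      γ * (L * dist (M' (s, π s)) (M (s, π s))) +
        γ * |value M' π r γ (M' (s, π s)) - value M π r γ (M' (s, π s))| := by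
  rw [value_eq_add_mul_value M' π hγ0 hγ1 hR, value_eq_add_mul_value M π hγ0 hγ1 hR,
    add_sub_add_left_eq_sub, ← mul_sub, abs_mul, abs_of_nonneg hγ0, ← mul_add]
  gcongr
  refine (abs_sub_le _ (value M π r γ (M' (s, π s))) _).trans ?_
  rw [add_comm]
  gcongr
  exact hLip _ _

end

/-- If `V^π_M` is `L`-Lipschitz in the initial state, then the value difference between
models `M'` and `M` is bounded by `κ·L` times the discounted visitation expectation
(along `M'`'s trajectory) of the model discrepancy; equivalently by
`L · Σ_t γ^(t+1) · dist(M'(s_t,π s_t), M(s_t,π s_t))`, in `[0,∞]`. -/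
theorem value_diff_le_visitation_discrepancy
    {S A : Type*} [MetricSpace S]
    (M M' : S × A → S) (π : S → A) (r : S × A → ℝ) (R γ L : ℝ)
    (hγ0 : 0 < γ) (hγ1 : γ < 1)
    (hR : ∀ p : S × A, |r p| ≤ R)
    (hL : 0 ≤ L)
    (hLip : ∀ s s' : S, |value M π r γ s - value M π r γ s'| ≤ L * dist s s')
    (s₀ : S) :
    (ENNReal.ofReal |value M' π r γ s₀ - value M π r γ s₀| ≤
      ENNReal.ofReal (γ / (1 - γ) * L) *
        (ENNReal.ofReal (1 - γ) *
          ∑' t : ℕ, ENNReal.ofReal (γ ^ t) *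
            ENNReal.ofReal (dist (M' (traj M' π s₀ t, π (traj M' π s₀ t)))
              (M (traj M' π s₀ t, π (traj M' π s₀ t)))))) ∧
    (ENNReal.ofReal |value M' π r γ s₀ - value M π r γ s₀| ≤
      ENNReal.ofReal L *
        ∑' t : ℕ, ENNReal.ofReal (γ ^ (t + 1)) *
          ENNReal.ofReal (dist (M' (traj M' π s₀ t, π (traj M' π s₀ t)))
            (M (traj M' π s₀ t, π (traj M' π s₀ t))))) := by
  set s := traj M' π s₀
  set d : ℕ → ℝ := fun t ↦ dist (M' (s t, π (s t))) (M (s t, π (s t)))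
  have h_main : ENNReal.ofReal |value M' π r γ s₀ - value M π r γ s₀| ≤
      ∑' t, ENNReal.ofReal (γ ^ t * (γ * (L * d t))) :=
    ofReal_le_tsum_pow_mul_of_le_add_mul_succ
      (x := fun t ↦ |value M' π r γ (s t) - value M π r γ (s t)|)
      (B := R / (1 - γ) + R / (1 - γ)) hγ0.le hγ1
      (fun t ↦ by positivity)
      (fun t ↦ (abs_sub _ _).trans <|
        add_le_add (abs_value_le M' π hγ0.le hγ1 hR _) (abs_value_le M π hγ0.le hγ1 hR _))
      (fun t ↦ abs_value_sub_value_le M π M' hγ0.le hγ1 hR hLip (s t))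
  have h_second : ∑' t, ENNReal.ofReal (γ ^ t * (γ * (L * d t))) =
      ENNReal.ofReal L * ∑' t, ENNReal.ofReal (γ ^ (t + 1)) * ENNReal.ofReal (d t) := by
    rw [← ENNReal.tsum_mul_left]
    refine tsum_congr fun t ↦ ?_
    rw [← ENNReal.ofReal_mul (by positivity), ← ENNReal.ofReal_mul hL, pow_succ]
    congr 1
    ring
  have h_first : ENNReal.ofReal (γ / (1 - γ) * L) *
        (ENNReal.ofReal (1 - γ) * ∑' t, ENNReal.ofReal (γ ^ t) * ENNReal.ofReal (d t)) =
      ENNReal.ofReal L * ∑' t, ENNReal.ofReal (γ ^ (t + 1)) * ENNReal.ofReal (d t) := by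
    have h1γ : 0 < 1 - γ := sub_pos.mpr hγ1
    rw [← ENNReal.tsum_mul_left, ← ENNReal.tsum_mul_left, ← ENNReal.tsum_mul_left]
    refine tsum_congr fun t ↦ ?_
    iterate 5 rw [← ENNReal.ofReal_mul (by positivity)]
    congr 1
    field_simp
    ring
  exact ⟨h_main.trans (h_second.trans h_first.symm).le, h_main.trans h_second.le⟩
end

section
/- Suppose V_g is L-Lipschitz for some L ≥ 0. Then for every state s ∈ S and every j ≥ 0, the one-step difference of hybrid returns is bounded by the one-step model discrepancy along the f-trajectory: |W_{j+1}(s) − W_j(s)| ≤ L · γ^{j+1} · dist(f(f^j(s)), g(f^j(s))). -/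
/-- Value function of a dynamics map `f`: `V_f(s) = Σ_t γ^t r(f^t(s))`. -/
noncomputable def val {S : Type*} (f : S → S) (r : S → ℝ) (γ : ℝ) (s : S) : ℝ :=
  ∑' t : ℕ, γ ^ t * r (f^[t] s)

/-- Hybrid return: follow `f` for the first `j` steps, then `g` thereafter:
`W_j(s) = Σ_{t<j} γ^t r(f^t(s)) + γ^j V_g(f^j(s))`. -/
noncomputable def hyb {S : Type*} (f g : S → S) (r : S → ℝ) (γ : ℝ) (j : ℕ) (s : S) : ℝ :=
  (∑ t ∈ Finset.range j, γ ^ t * r (f^[t] s)) + γ ^ j * val g r γ (f^[j] s)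

/-! The Bellman identity `V_g(x) = r(x) + γ V_g(g x)` at `x = f^j(s)` gives
`W_{j+1}(s) − W_j(s) = γ^{j+1} (V_g(f(f^j s)) − V_g(g(f^j s)))`: the two hybrid returns
differ only in which model makes the step out of `f^j(s)`, so the Lipschitz bound on `V_g`
applies to that single step. -/

lemma summable_pow_mul_of_abs_le_s8 {a : ℕ → ℝ} {R γ : ℝ} (ha : ∀ t, |a t| ≤ R) (hγ : |γ| < 1) :
    Summable fun t => γ ^ t * a t := by
  refine Summable.of_norm_bounded
    ((summable_geometric_of_lt_one (abs_nonneg γ) hγ).mul_right R) fun t => ?_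
  rw [Real.norm_eq_abs, abs_mul, abs_pow]
  exact mul_le_mul_of_nonneg_left (ha t) (pow_nonneg (abs_nonneg γ) t)

section Bellman

variable {S : Type*} {g : S → S} {r : S → ℝ} {R γ : ℝ}

lemma val_eq_add_mul_val (hr : ∀ s, |r s| ≤ R) (hγ : |γ| < 1) (x : S) :
    val g r γ x = r x + γ * val g r γ (g x) := by
  have hsum := summable_pow_mul_of_abs_le_s8 (fun t => hr (g^[t] x)) hγ
  rw [val, hsum.tsum_eq_zero_add, val, ← tsum_mul_left]
  simp only [pow_zero, one_mul, pow_succ, Function.iterate_succ_apply]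
  congr 1
  exact tsum_congr fun t => by ring

lemma hyb_succ_sub_hyb (f : S → S) (hr : ∀ s, |r s| ≤ R) (hγ : |γ| < 1) (j : ℕ) (s : S) :
    hyb f g r γ (j + 1) s - hyb f g r γ j s =
      γ ^ (j + 1) * (val g r γ (f (f^[j] s)) - val g r γ (g (f^[j] s))) := by
  rw [hyb, hyb, Finset.sum_range_succ, val_eq_add_mul_val hr hγ (f^[j] s),
    Function.iterate_succ_apply']
  ring

end Bellman

theorem abs_hyb_succ_sub_hyb_le_general
    {S : Type*} [MetricSpace S]
    (f g : S → S) (r : S → ℝ) (R γ L : ℝ)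
    (hγ0 : 0 < γ) (hγ1 : γ < 1)
    (hR : ∀ s : S, |r s| ≤ R)
    (hLip : ∀ s s' : S, |val g r γ s - val g r γ s'| ≤ L * dist s s')
    (s : S) (j : ℕ) :
    |hyb f g r γ (j + 1) s - hyb f g r γ j s| ≤
      L * γ ^ (j + 1) * dist (f (f^[j] s)) (g (f^[j] s)) := by
  have hγ : |γ| < 1 := abs_lt.2 ⟨by linarith, hγ1⟩
  rw [hyb_succ_sub_hyb f hR hγ, abs_mul, abs_of_pos (pow_pos hγ0 _), mul_assoc, mul_left_comm]
  exact mul_le_mul_of_nonneg_left (hLip _ _) (pow_pos hγ0 _).le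

/-- If `V_g` is `L`-Lipschitz, the one-step difference of hybrid returns is bounded by the
one-step model discrepancy along the `f`-trajectory:
`|W_{j+1}(s) − W_j(s)| ≤ L·γ^{j+1}·dist(f(f^j(s)), g(f^j(s)))`. -/
theorem abs_hyb_succ_sub_hyb_le
    {S : Type*} [MetricSpace S]
    (f g : S → S) (r : S → ℝ) (R γ L : ℝ)
    (hγ0 : 0 < γ) (hγ1 : γ < 1)
    (hR : ∀ s : S, |r s| ≤ R)
    (hL : 0 ≤ L)
    (hLip : ∀ s s' : S, |val g r γ s - val g r γ s'| ≤ L * dist s s')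
    (s : S) (j : ℕ) :
    |hyb f g r γ (j + 1) s - hyb f g r γ j s| ≤
      L * γ ^ (j + 1) * dist (f (f^[j] s)) (g (f^[j] s)) :=
  abs_hyb_succ_sub_hyb_le_general f g r R γ L hγ0 hγ1 hR hLip s j
end
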